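/- arXiv:2605.12251 — 4 statements merged into one kernel-verified Lean document; each statement's English description precedes it below -/
import Mathlib

section
/- Let n ≥ 1, let λ : Fin n → ℝ satisfy 1 > λ_0 > λ_1 > ⋯ > λ_{n-1} > 0, let d : Fin n → ℝ, and define Δ_j(p) = λ_p^j · d_p for j ∈ ℕ. Fix i < n and j ∈ ℕ. If for every i' ≤ i the prefix sum ∑_{p=0}^{i'} Δ_j(p) is ≤ 0, then for every j' ≥ j and every i' ≤ i, the prefix sum ∑_{p=0}^{i'} Δ_{j'}(p) is ≤ 0. -/
private lemma abel_aux (w a : ℕ → ℝ) (hw0 : ∀ k, 0 ≤ w k) (hmono : ∀ k, w (k + 1) ≤ w k)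
    (m : ℕ) (hS : ∀ k ≤ m, ∑ p ∈ Finset.range (k + 1), a p ≤ 0) :
    ∑ p ∈ Finset.range (m + 1), w p * a p ≤ w m * ∑ p ∈ Finset.range (m + 1), a p := by
  induction m with
  | zero => simp
  | succ m ih =>
    have hSm : ∑ p ∈ Finset.range (m + 1), a p ≤ 0 := hS m (Nat.le_succ m)
    have ih' := ih (fun k hk => hS k (hk.trans (Nat.le_succ m)))
    rw [Finset.sum_range_succ, Finset.sum_range_succ (f := a)]
    have h1 : w m * ∑ p ∈ Finset.range (m + 1), a p ≤
        w (m + 1) * ∑ p ∈ Finset.range (m + 1), a p :=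
      mul_le_mul_of_nonpos_right (hmono m) hSm
    nlinarith [ih', h1]

private lemma fin_sum_iic (n : ℕ) (f : Fin n → ℝ) (b : Fin n) :
    ∑ p ∈ Finset.Iic b, f p
      = ∑ k ∈ Finset.range (b.val + 1), (if h : k < n then f ⟨k, h⟩ else 0) := by
  have hrange : Finset.range (b.val + 1) = Finset.Iic b.val := by
    ext k; simp [Nat.lt_succ_iff]
  rw [hrange, ← Fin.map_valEmbedding_Iic, Finset.sum_map]
  refine Finset.sum_congr rfl fun p _ => ?_
  simp [Fin.valEmbedding, p.isLt]

/-- Lemma 3 (initial sums): with strictly decreasing discount factors in (0,1) and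
`Δ_j(p) = λ_p^j · d_p`, if all prefix sums of `Δ_j` up to index `i` are nonpositive,
then the same holds for all later steps `j' ≥ j`. -/
theorem initial_sums_nonpos_persist
    (n : ℕ) (hn : 1 ≤ n) (lam d : Fin n → ℝ)
    (hsa : StrictAnti lam) (hpos : ∀ p, 0 < lam p) (hlt : ∀ p, lam p < 1)
    (i : Fin n) (j : ℕ)
    (h : ∀ i' : Fin n, i' ≤ i → ∑ p ∈ Finset.Iic i', lam p ^ j * d p ≤ 0) :
    ∀ j' : ℕ, j ≤ j' → ∀ i' : Fin n, i' ≤ i →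
      ∑ p ∈ Finset.Iic i', lam p ^ j' * d p ≤ 0 := by
  intro j' hj i' hi'
  set e := j' - j with he
  have hj' : j' = j + e := by omega
  -- weights and values as ℕ-indexed functions
  set w : ℕ → ℝ := fun k => if h : k < n then lam ⟨k, h⟩ ^ e else 0 with hw
  set a : ℕ → ℝ := fun k => if h : k < n then lam ⟨k, h⟩ ^ j * d ⟨k, h⟩ else 0 with ha
  have hw0 : ∀ k, 0 ≤ w k := by
    intro k; simp only [hw]
    split
    · exact pow_nonneg (hpos _).le e
    · exact le_refl 0
  have hmono : ∀ k, w (k + 1) ≤ w k := by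
    intro k; simp only [hw]
    split
    · rename_i h1
      have hk : k < n := Nat.lt_of_succ_lt h1
      simp only [hk, dif_pos]
      exact pow_le_pow_left₀ (le_of_lt (hpos _)) (le_of_lt (hsa (by simp [Fin.lt_def]))) e
    · split
      · exact pow_nonneg (hpos _).le e
      · exact le_refl 0
  have hS : ∀ k ≤ i'.val, ∑ p ∈ Finset.range (k + 1), a p ≤ 0 := by
    intro k hk
    have hkn : k < n := lt_of_le_of_lt hk i'.isLt
    have := h ⟨k, hkn⟩ (le_trans (by simpa [Fin.le_def] using hk) hi')
    rw [fin_sum_iic] at this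
    exact this
  have key := abel_aux w a hw0 hmono i'.val hS
  have hfin : ∑ p ∈ Finset.Iic i', lam p ^ j' * d p
      = ∑ k ∈ Finset.range (i'.val + 1), w k * a k := by
    rw [fin_sum_iic]
    refine Finset.sum_congr rfl fun k hk => ?_
    by_cases hkn : k < n
    · simp only [hw, ha, hkn, dif_pos, hj', pow_add]
      ring
    · simp [hw, ha, hkn]
  rw [hfin]
  have hwi : 0 ≤ w i'.val := hw0 _
  have hSi : ∑ p ∈ Finset.range (i'.val + 1), a p ≤ 0 := hS i'.val le_rfl
  calc ∑ k ∈ Finset.range (i'.val + 1), w k * a k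
      ≤ w i'.val * ∑ p ∈ Finset.range (i'.val + 1), a p := key
    _ ≤ 0 := mul_nonpos_of_nonneg_of_nonpos hwi hSi
end

section
/- Let n ≥ 1, let λ : Fin n → ℝ satisfy 1 > λ_0 > λ_1 > ⋯ > λ_{n-1} > 0, and let d : Fin n → ℝ. Fix j ∈ ℕ. If for every q < n the prefix sum ∑_{p=0}^{q} λ_p^j · d_p is ≤ 0, then for every j' ≥ j the full sum ∑_{p=0}^{n-1} λ_p^{j'} · d_p is ≤ 0. -/
lemma abel_key (a : ℕ → ℝ) :
    ∀ n : ℕ, ∀ w : ℕ → ℝ, (∀ i k, i ≤ k → k < n → w k ≤ w i) → (∀ i, i < n → 0 ≤ w i) →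
    (∀ q, q < n → ∑ i ∈ Finset.range (q + 1), a i ≤ 0) →
    ∑ i ∈ Finset.range n, w i * a i ≤ 0 := by
  intro n
  induction n with
  | zero => intro _ _ _ _; simp
  | succ m ih =>
    intro w hmono hnn hpre
    have key : ∑ i ∈ Finset.range (m + 1), w i * a i
        = (∑ i ∈ Finset.range m, (w i - w m) * a i)
          + w m * ∑ i ∈ Finset.range (m + 1), a i := by
      have e1 : ∑ i ∈ Finset.range (m + 1), w i * a i
          = ∑ i ∈ Finset.range (m + 1), ((w i - w m) * a i + w m * a i) := by
        apply Finset.sum_congr rfl; intro i _; ring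
      rw [e1, Finset.sum_add_distrib, Finset.sum_range_succ (fun i => (w i - w m) * a i),
        ← Finset.mul_sum]
      ring
    rw [key]
    have h1 : ∑ i ∈ Finset.range m, (w i - w m) * a i ≤ 0 := by
      apply ih (fun i => w i - w m)
      · intro i k hik hkm
        have := hmono i k hik (Nat.lt_succ_of_lt hkm)
        linarith
      · intro i him
        have := hmono i m him.le (Nat.lt_succ_self m)
        linarith
      · intro q hq; exact hpre q (Nat.lt_succ_of_lt hq)
    have h2 : w m * ∑ i ∈ Finset.range (m + 1), a i ≤ 0 :=
      mul_nonpos_of_nonneg_of_nonpos (hnn m (Nat.lt_succ_self m))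
        (hpre m (Nat.lt_succ_self m))
    linarith

/-- Stopping criterion: once all prefix sums of the discounted deviation differences
are nonpositive at step `j`, the full sum stays nonpositive at every later step. -/
theorem full_sum_nonpos_persist
    (n : ℕ) (hn : 1 ≤ n) (lam d : Fin n → ℝ)
    (hsa : StrictAnti lam) (hpos : ∀ p, 0 < lam p) (hlt : ∀ p, lam p < 1)
    (j : ℕ)
    (h : ∀ q : Fin n, ∑ p ∈ Finset.Iic q, lam p ^ j * d p ≤ 0) :
    ∀ j' : ℕ, j ≤ j' → ∑ p : Fin n, lam p ^ j' * d p ≤ 0 := by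
  intro j' hj
  set a : ℕ → ℝ := fun i => if hi : i < n then lam ⟨i, hi⟩ ^ j * d ⟨i, hi⟩ else 0 with ha
  set w : ℕ → ℝ := fun i => if hi : i < n then lam ⟨i, hi⟩ ^ (j' - j) else 0 with hw
  have hmain : ∑ i ∈ Finset.range n, w i * a i ≤ 0 := by
    apply abel_key a n w
    · intro i k hik hkn
      simp only [hw, dif_pos hkn, dif_pos (lt_of_le_of_lt hik hkn)]
      exact pow_le_pow_left₀ (hpos _).le
        (hsa.antitone (show (⟨i, _⟩ : Fin n) ≤ ⟨k, hkn⟩ from hik)) _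
    · intro i hin
      simp only [hw, dif_pos hin]
      exact (pow_pos (hpos _) _).le
    · intro q hq
      have heq : ∑ i ∈ Finset.range (q + 1), a i
          = ∑ p ∈ Finset.Iic (⟨q, hq⟩ : Fin n), lam p ^ j * d p := by
        have hr : Finset.range (q + 1) = Finset.Iic q := by
          ext x; simp [Nat.lt_succ_iff]
        rw [hr, show (Finset.Iic q) = (Finset.Iic (⟨q, hq⟩ : Fin n)).map Fin.valEmbedding from (Fin.map_valEmbedding_Iic (⟨q, hq⟩ : Fin n)).symm, Finset.sum_map]
        apply Finset.sum_congr rfl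
        intro p _
        simp only [ha, Fin.valEmbedding_apply, dif_pos p.isLt, Fin.eta]
      rw [heq]; exact h _
  calc ∑ p : Fin n, lam p ^ j' * d p
      = ∑ i ∈ Finset.range n, w i * a i := by
        rw [Finset.sum_range fun i => w i * a i]
        apply Finset.sum_congr rfl
        intro p _
        simp only [ha, hw, dif_pos p.isLt, Fin.eta]
        rw [← mul_assoc, ← pow_add, Nat.sub_add_cancel hj]
    _ ≤ 0 := hmain
end

section
/- Let n ≥ 2, let λ : Fin n → ℝ satisfy 1 > λ_0 > λ_1 > ⋯ > λ_{n-1} > 0, let d : Fin n → ℝ, and fix i < n−1 such that d_p = 0 for all p < i and d_i < 0. If j ∈ ℕ satisfies λ_{i+1}^j · ∑_{p=i+1}^{n-1} max(d_p, 0) ≤ λ_i^j · (−d_i), then ∑_{p=0}^{n-1} λ_p^j · d_p ≤ 0. -/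
/-- Quantitative core of Lemma 4: if the first nonzero deviation difference (at
index `i`) is negative and the discounted advantage of the less patient principals
is dominated by the discounted disadvantage of principal `i`, then the total
discounted deviation difference is nonpositive. -/
theorem deviation_sum_nonpos_of_dominated
    (n : ℕ) (hn : 2 ≤ n) (lam d : Fin n → ℝ)
    (hsa : StrictAnti lam) (hpos : ∀ p, 0 < lam p) (hlt : ∀ p, lam p < 1)
    (i : Fin n) (hi : (i : ℕ) + 1 < n)
    (hzero : ∀ p : Fin n, p < i → d p = 0) (hdi : d i < 0)
    (j : ℕ)
    (hj : lam ⟨(i : ℕ) + 1, hi⟩ ^ j * ∑ p ∈ Finset.Ioi i, max (d p) 0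
            ≤ lam i ^ j * (-(d i))) :
    ∑ p : Fin n, lam p ^ j * d p ≤ 0 := by
  have hsum1 : ∑ p : Fin n, lam p ^ j * d p
      = ∑ p ∈ Finset.Ici i, lam p ^ j * d p := by
    rw [← Finset.sum_subset (Finset.subset_univ (Finset.Ici i))]
    intro p _ hp
    have : p < i := by simpa using hp
    rw [hzero p this, mul_zero]
  have hins : Finset.Ici i = insert i (Finset.Ioi i) := by
    ext p; simp [Finset.mem_Ici, Finset.mem_Ioi, le_iff_lt_or_eq, or_comm, eq_comm]
  have hsum2 : ∑ p ∈ Finset.Ici i, lam p ^ j * d p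
      = lam i ^ j * d i + ∑ p ∈ Finset.Ioi i, lam p ^ j * d p := by
    rw [hins, Finset.sum_insert (by simp)]
  have hbound : ∑ p ∈ Finset.Ioi i, lam p ^ j * d p
      ≤ lam ⟨(i : ℕ) + 1, hi⟩ ^ j * ∑ p ∈ Finset.Ioi i, max (d p) 0 := by
    rw [Finset.mul_sum]
    apply Finset.sum_le_sum
    intro p hp
    have hpi : i < p := Finset.mem_Ioi.mp hp
    have hle : lam p ≤ lam ⟨(i : ℕ) + 1, hi⟩ := by
      apply hsa.antitone
      exact Fin.mk_le_of_le_val hpi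
    calc lam p ^ j * d p ≤ lam p ^ j * max (d p) 0 :=
          mul_le_mul_of_nonneg_left (le_max_left _ _) (pow_nonneg (hpos p).le j)
      _ ≤ lam ⟨(i : ℕ) + 1, hi⟩ ^ j * max (d p) 0 :=
          mul_le_mul_of_nonneg_right
            (pow_le_pow_left₀ (hpos p).le hle j) (le_max_right _ _)
  rw [hsum1, hsum2]
  linarith
end

section
/- Define W : ℕ → ℝ by W(k) = (9 + 2·(2/3)^k) + (9/2 − (5/2)·(1/3)^k). Then W(2) = 127/9, W(k) < 127/9 for every k ≠ 2, and 127/9 > 27/2. -/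
/-- Social welfare of the strategy `aᵏbᵠ` in the investment MDP: Alice's payoff
`9 + 2·(2/3)^k` plus Bob's payoff `9/2 − (5/2)·(1/3)^k`. -/
noncomputable def W (k : ℕ) : ℝ :=
  (9 + 2 * (2/3 : ℝ) ^ k) + (9/2 - (5/2) * (1/3 : ℝ) ^ k)

/-- The socially optimal waiting time is exactly `k = 2`: it achieves welfare
`127/9`, strictly beats every other waiting time, and strictly beats the
never-invest welfare `27/2`. -/
theorem welfare_optimal_at_two :
    W 2 = 127/9 ∧ (∀ k : ℕ, k ≠ 2 → W k < 127/9) ∧ (127/9 : ℝ) > 27/2 := by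
  refine ⟨by norm_num [W], ?_, by norm_num⟩
  intro k hk
  match k, hk with
  | 0, _ => norm_num [W]
  | 1, _ => norm_num [W]
  | 3, _ => norm_num [W]
  | (n+4), _ =>
    have h1 : (2/3 : ℝ) ^ (n+4) ≤ (2/3 : ℝ) ^ 4 :=
      pow_le_pow_of_le_one (by norm_num) (by norm_num) (by omega)
    have h2 : (0:ℝ) < (1/3 : ℝ) ^ (n+4) := by positivity
    unfold W
    nlinarith
end
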